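/- arXiv:2507.21289 — 4 statements merged into one kernel-verified Lean document; each statement's English description precedes it below -/
import Mathlib

section
/- Let A and B be symmetric n×n real matrices with A·1ₙ = k_A·1ₙ and B·1ₙ = k_B·1ₙ, and let C be an n×n matrix with C·1ₙ = -l·1ₙ and Cᵀ·1ₙ = -l·1ₙ. Let ω₁, ω₂ be nonzero reals with ω₁² + ω₂² = 1, and suppose the detuning condition k_A - k_B = l·(ω₂² - ω₁²)/(ω₁·ω₂) holds. Then the vector ψ = (ω₁·V_A, ω₂·V_B), with V_A = V_B = (1/√n)·1ₙ, is an eigenvector of R = [[A, C], [Cᵀ, B]] with eigenvalue λ = k_A - (ω₂/ω₁)·l, and moreover λ = k_B - (ω₁/ω₂)·l. -/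
open Matrix Real

theorem stmt2 (n : ℕ) (hn : 0 < n) (kA kB l ω₁ ω₂ : ℝ)
    (A B C : Matrix (Fin n) (Fin n) ℝ)
    (hA : A.IsSymm) (hB : B.IsSymm)
    (hAk : A.mulVec (fun _ => 1) = fun _ => kA)
    (hBk : B.mulVec (fun _ => 1) = fun _ => kB)
    (hCr : C.mulVec (fun _ => 1) = fun _ => -l)
    (hCc : Cᵀ.mulVec (fun _ => 1) = fun _ => -l)
    (hω1 : ω₁ ≠ 0) (hω2 : ω₂ ≠ 0) (hnorm : ω₁ ^ 2 + ω₂ ^ 2 = 1)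
    (hdetune : kA - kB = l * (ω₂ ^ 2 - ω₁ ^ 2) / (ω₁ * ω₂)) :
    (Matrix.fromBlocks A C Cᵀ B).mulVec
        (Sum.elim (fun _ : Fin n => ω₁ * (1 / Real.sqrt n))
                  (fun _ : Fin n => ω₂ * (1 / Real.sqrt n)))
      = (kA - (ω₂ / ω₁) * l) • (Sum.elim (fun _ : Fin n => ω₁ * (1 / Real.sqrt n))
                  (fun _ : Fin n => ω₂ * (1 / Real.sqrt n))) ∧
    kA - (ω₂ / ω₁) * l = kB - (ω₁ / ω₂) * l := by
  have hlam : kA - (ω₂ / ω₁) * l = kB - (ω₁ / ω₂) * l := by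
    field_simp at hdetune ⊢
    nlinarith [hdetune]
  refine ⟨?_, hlam⟩
  have key : ∀ (M : Matrix (Fin n) (Fin n) ℝ) (k c : ℝ),
      M.mulVec (fun _ => 1) = (fun _ => k) →
      M.mulVec (fun _ => c) = fun _ => c * k := by
    intro M k c h
    have h1 : (fun _ : Fin n => c) = c • (fun _ : Fin n => (1 : ℝ)) := by
      funext i; simp
    rw [h1, Matrix.mulVec_smul, h]
    rfl
  rw [Matrix.fromBlocks_mulVec]
  funext i
  cases i with
  | inl i =>
      have hA' := key A kA (ω₁ * (1 / Real.sqrt n)) hAk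
      have hC' := key C (-l) (ω₂ * (1 / Real.sqrt n)) hCr
      simp only [Sum.elim_comp_inl, Sum.elim_comp_inr, Sum.elim_inl, Pi.add_apply, Pi.smul_apply, smul_eq_mul]
      rw [hA', hC']
      field_simp
      ring
  | inr i =>
      have hB' := key B kB (ω₂ * (1 / Real.sqrt n)) hBk
      have hC' := key Cᵀ (-l) (ω₁ * (1 / Real.sqrt n)) hCc
      simp only [Sum.elim_comp_inl, Sum.elim_comp_inr, Sum.elim_inr, Pi.add_apply, Pi.smul_apply, smul_eq_mul]
      rw [hC', hB']
      have : kA - (ω₂ / ω₁) * l = kB - (ω₁ / ω₂) * l := hlam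
      rw [this]
      field_simp
      have hs : Real.sqrt n * Real.sqrt n = (n : ℝ) :=
        Real.mul_self_sqrt (Nat.cast_nonneg n)
      linear_combination
end

section
/- Let A and B be symmetric n×n real matrices with A·1ₙ = k·1ₙ and B·1ₙ = k·1ₙ, and let C_A, C_B be n×n matrices with C_A·1ₙ = -l_A·1ₙ and C_B·1ₙ = -l_B·1ₙ. Let ω₁, ω₂ be nonzero reals with ω₁² + ω₂² = 1 satisfying l_A/l_B = ω₁²/ω₂² (equivalently ω₂²·l_A = ω₁²·l_B, with l_B ≠ 0). Then ψ = (ω₁·V_A, ω₂·V_B), with V_A = V_B = (1/√n)·1ₙ, is an eigenvector of R = [[A, C_A], [C_B, B]] with eigenvalue λ = k − (ω₂/ω₁)·l_A = k − (ω₁/ω₂)·l_B. -/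
/-! With both amplitudes constant on each block, `R ψ` is again constant on each block, with values
`ω₁ k - ω₂ l_A` and `ω₂ k - ω₁ l_B` (times `1/√n`), read off from the row sums. The first is
`(k - (ω₂/ω₁) l_A) ω₁`, and the tuning `ω₂² l_A = ω₁² l_B` makes the second `(k - (ω₁/ω₂) l_B) ω₂`
with the same eigenvalue. -/

open Matrix Real

section RowSums

variable {m n o p α : Type*} [Fintype n] [Fintype p] [CommSemiring α]

theorem Matrix.mulVec_const_of_mulVec_one {M : Matrix m n α} {r : α}
    (hM : M *ᵥ (fun _ => 1) = fun _ => r) (c : α) :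
    M *ᵥ (fun _ => c) = fun _ => c * r := by
  have hc : (fun _ : n => c) = c • (fun _ : n => (1 : α)) := by
    funext; simp
  rw [hc, mulVec_smul, hM]
  rfl

theorem Matrix.fromBlocks_mulVec_sumElim_const
    {A : Matrix m n α} {B : Matrix m p α} {C : Matrix o n α} {D : Matrix o p α} {a b c d : α}
    (hA : A *ᵥ (fun _ => 1) = fun _ => a) (hB : B *ᵥ (fun _ => 1) = fun _ => b)
    (hC : C *ᵥ (fun _ => 1) = fun _ => c) (hD : D *ᵥ (fun _ => 1) = fun _ => d) (x y : α) :
    fromBlocks A B C D *ᵥ Sum.elim (fun _ => x) (fun _ => y) =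
      Sum.elim (fun _ => x * a + y * b) (fun _ => x * c + y * d) := by
  rw [fromBlocks_mulVec]
  ext (i | i) <;>
    simp [mulVec_const_of_mulVec_one hA, mulVec_const_of_mulVec_one hB,
      mulVec_const_of_mulVec_one hC, mulVec_const_of_mulVec_one hD]

end RowSums

theorem div_mul_eq_div_mul_of_sq_mul_eq {K : Type*} [Field K] {ω₁ ω₂ lA lB : K}
    (hω1 : ω₁ ≠ 0) (hω2 : ω₂ ≠ 0) (htune : ω₂ ^ 2 * lA = ω₁ ^ 2 * lB) :
    ω₂ / ω₁ * lA = ω₁ / ω₂ * lB := by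
  field_simp
  linear_combination htune

theorem stmt6_general (n : ℕ) (k lA lB ω₁ ω₂ : ℝ)
    (A B CA CB : Matrix (Fin n) (Fin n) ℝ)
    (hAk : A.mulVec (fun _ => 1) = fun _ => k)
    (hBk : B.mulVec (fun _ => 1) = fun _ => k)
    (hCA : CA.mulVec (fun _ => 1) = fun _ => -lA)
    (hCB : CB.mulVec (fun _ => 1) = fun _ => -lB)
    (hω1 : ω₁ ≠ 0) (hω2 : ω₂ ≠ 0) (htune : ω₂ ^ 2 * lA = ω₁ ^ 2 * lB) :
    (Matrix.fromBlocks A CA CB B).mulVec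
        (Sum.elim (fun _ : Fin n => ω₁ * (1 / Real.sqrt n))
                  (fun _ : Fin n => ω₂ * (1 / Real.sqrt n)))
      = (k - (ω₂ / ω₁) * lA) • (Sum.elim (fun _ : Fin n => ω₁ * (1 / Real.sqrt n))
                  (fun _ : Fin n => ω₂ * (1 / Real.sqrt n))) ∧
    k - (ω₂ / ω₁) * lA = k - (ω₁ / ω₂) * lB := by
  have heig := div_mul_eq_div_mul_of_sq_mul_eq hω1 hω2 htune
  refine ⟨?_, by rw [heig]⟩
  rw [fromBlocks_mulVec_sumElim_const hAk hCA hCB hBk]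
  ext (i | i)
  · simp only [Sum.elim_inl, Pi.smul_apply, smul_eq_mul]
    field_simp
    ring
  · simp only [Sum.elim_inr, Pi.smul_apply, smul_eq_mul, heig]
    field_simp
    ring

theorem stmt6 (n : ℕ) (hn : 0 < n) (k lA lB ω₁ ω₂ : ℝ)
    (A B CA CB : Matrix (Fin n) (Fin n) ℝ)
    (hA : A.IsSymm) (hB : B.IsSymm)
    (hAk : A.mulVec (fun _ => 1) = fun _ => k)
    (hBk : B.mulVec (fun _ => 1) = fun _ => k)
    (hCA : CA.mulVec (fun _ => 1) = fun _ => -lA)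
    (hCB : CB.mulVec (fun _ => 1) = fun _ => -lB)
    (hω1 : ω₁ ≠ 0) (hω2 : ω₂ ≠ 0) (hnorm : ω₁ ^ 2 + ω₂ ^ 2 = 1)
    (hlB : lB ≠ 0) (htune : ω₂ ^ 2 * lA = ω₁ ^ 2 * lB) :
    (Matrix.fromBlocks A CA CB B).mulVec
        (Sum.elim (fun _ : Fin n => ω₁ * (1 / Real.sqrt n))
                  (fun _ : Fin n => ω₂ * (1 / Real.sqrt n)))
      = (k - (ω₂ / ω₁) * lA) • (Sum.elim (fun _ : Fin n => ω₁ * (1 / Real.sqrt n))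
                  (fun _ : Fin n => ω₂ * (1 / Real.sqrt n))) ∧
    k - (ω₂ / ω₁) * lA = k - (ω₁ / ω₂) * lB :=
  stmt6_general n k lA lB ω₁ ω₂ A B CA CB hAk hBk hCA hCB hω1 hω2 htune
end

section
/- Let A, B be symmetric n×n matrices with A·1ₙ = k_A·1ₙ, B·1ₙ = k_B·1ₙ, and let C_A, C_B be n×n matrices with C_A·1ₙ = -l_A·1ₙ and C_B·1ₙ = -l_B·1ₙ. Set V_A = V_B = (1/√n)·1ₙ and let ω₁, ω₂ be reals, not both zero, with ω₁² + ω₂² = 1. If ψ = (ω₁·V_A, ω₂·V_B) is an eigenvector of R = [[A, C_A], [C_B, B]], then ω₂²·l_A − ω₁²·l_B + ω₁·ω₂·(k_B − k_A) = 0. Conversely, if ω₁, ω₂ are both nonzero and this characteristic equation holds, then ψ is an eigenvector of R with eigenvalue k_A − (ω₂/ω₁)·l_A. -/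
open Matrix Real

theorem stmt10 (n : ℕ) (hn : 0 < n) (kA kB lA lB ω₁ ω₂ : ℝ)
    (A B CA CB : Matrix (Fin n) (Fin n) ℝ)
    (hA : A.IsSymm) (hB : B.IsSymm)
    (hAk : A.mulVec (fun _ => 1) = fun _ => kA)
    (hBk : B.mulVec (fun _ => 1) = fun _ => kB)
    (hCA : CA.mulVec (fun _ => 1) = fun _ => -lA)
    (hCB : CB.mulVec (fun _ => 1) = fun _ => -lB)
    (hω : ¬(ω₁ = 0 ∧ ω₂ = 0)) (hnorm : ω₁ ^ 2 + ω₂ ^ 2 = 1) :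
    ((∃ μ : ℝ, (Matrix.fromBlocks A CA CB B).mulVec
        (Sum.elim (fun _ : Fin n => ω₁ * (1 / Real.sqrt n))
                  (fun _ : Fin n => ω₂ * (1 / Real.sqrt n)))
      = μ • (Sum.elim (fun _ : Fin n => ω₁ * (1 / Real.sqrt n))
                  (fun _ : Fin n => ω₂ * (1 / Real.sqrt n)))) →
      ω₂ ^ 2 * lA - ω₁ ^ 2 * lB + ω₁ * ω₂ * (kB - kA) = 0) ∧
    (ω₁ ≠ 0 → ω₂ ≠ 0 →
      ω₂ ^ 2 * lA - ω₁ ^ 2 * lB + ω₁ * ω₂ * (kB - kA) = 0 →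
      (Matrix.fromBlocks A CA CB B).mulVec
        (Sum.elim (fun _ : Fin n => ω₁ * (1 / Real.sqrt n))
                  (fun _ : Fin n => ω₂ * (1 / Real.sqrt n)))
      = (kA - (ω₂ / ω₁) * lA) • (Sum.elim (fun _ : Fin n => ω₁ * (1 / Real.sqrt n))
                  (fun _ : Fin n => ω₂ * (1 / Real.sqrt n)))) := by
  have hsn : (0:ℝ) < Real.sqrt n := Real.sqrt_pos.2 (by exact_mod_cast hn)
  have hs : (1 / Real.sqrt n : ℝ) ≠ 0 := by positivity
  have hrw : ∀ c : ℝ, (fun _ : Fin n => c * (1 / Real.sqrt n))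
      = (c * (1 / Real.sqrt n)) • (fun _ : Fin n => (1:ℝ)) := by
    intro c; funext i; simp
  have hmv : (Matrix.fromBlocks A CA CB B).mulVec
        (Sum.elim (fun _ : Fin n => ω₁ * (1 / Real.sqrt n))
                  (fun _ : Fin n => ω₂ * (1 / Real.sqrt n)))
      = Sum.elim (fun _ : Fin n => ω₁ * (1 / Real.sqrt n) * kA + ω₂ * (1 / Real.sqrt n) * (-lA))
                 (fun _ : Fin n => ω₁ * (1 / Real.sqrt n) * (-lB) + ω₂ * (1 / Real.sqrt n) * kB) := by
    rw [hrw ω₁, hrw ω₂, Matrix.fromBlocks_mulVec]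
    funext x
    cases x with
    | inl i =>
      simp only [Sum.elim_comp_inl, Sum.elim_comp_inr, Sum.elim_inl, Pi.add_apply,
        Matrix.mulVec_smul, hAk, hCA, Pi.smul_apply, smul_eq_mul]
    | inr i =>
      simp only [Sum.elim_comp_inl, Sum.elim_comp_inr, Sum.elim_inr, Pi.add_apply,
        Matrix.mulVec_smul, hBk, hCB, Pi.smul_apply, smul_eq_mul]
  have i0 : Fin n := ⟨0, hn⟩
  constructor
  · rintro ⟨μ, hμ⟩
    rw [hmv] at hμ
    have h1 := congrFun hμ (Sum.inl i0)
    have h2 := congrFun hμ (Sum.inr i0)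
    simp only [Sum.elim_inl, Sum.elim_inr, Pi.smul_apply, smul_eq_mul] at h1 h2
    have e1 : ω₁ * kA - ω₂ * lA = μ * ω₁ :=
      mul_right_cancel₀ hs (show (ω₁ * kA - ω₂ * lA) * (1 / Real.sqrt n)
        = (μ * ω₁) * (1 / Real.sqrt n) by linear_combination h1)
    have e2 : -(ω₁ * lB) + ω₂ * kB = μ * ω₂ :=
      mul_right_cancel₀ hs (show (-(ω₁ * lB) + ω₂ * kB) * (1 / Real.sqrt n)
        = (μ * ω₂) * (1 / Real.sqrt n) by linear_combination h2)
    linear_combination ω₁ * e2 - ω₂ * e1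
  · intro h1 h2 hchar
    rw [hmv]
    funext x
    cases x with
    | inl i =>
      simp only [Sum.elim_inl, Pi.smul_apply, smul_eq_mul]
      field_simp
      ring
    | inr i =>
      simp only [Sum.elim_inr, Pi.smul_apply, smul_eq_mul]
      have hnn : Real.sqrt n * Real.sqrt n = (n:ℝ) :=
        Real.mul_self_sqrt (by positivity)
      field_simp
      linear_combination hchar
end

section
/- For fixed a > 0, let p(n) = 2·√((−a² + an + n)/(n·(n+4)²)) + (a+2)/(n+4) be the minimal edge probability ensuring spectral gap at least a. Then the limit of n·p(n) as n → ∞ equals 2 + a + 2·√(1 + a). -/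
open Filter

theorem stmt16 (a : ℝ) (ha : 0 < a) :
    Tendsto (fun n : ℝ =>
        n * (2 * Real.sqrt ((-a ^ 2 + a * n + n) / (n * (n + 4) ^ 2)) + (a + 2) / (n + 4)))
      atTop (nhds (2 + a + 2 * Real.sqrt (1 + a))) := by
  have h4 : Tendsto (fun n : ℝ => n + 4) atTop atTop :=
    tendsto_atTop_add_const_right _ 4 tendsto_id
  have hfrac : Tendsto (fun n : ℝ => n / (n + 4)) atTop (nhds 1) := by
    have h0 : Tendsto (fun n : ℝ => 1 - 4 / (n + 4)) atTop (nhds 1) := by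
      have := (tendsto_inv_atTop_zero.comp h4).const_mul (4 : ℝ)
      simpa [div_eq_mul_inv] using (tendsto_const_nhds (x := (1:ℝ))).sub this
    refine h0.congr' ?_
    filter_upwards [eventually_gt_atTop (0 : ℝ)] with n hn
    have hn4 : n + 4 ≠ 0 := by linarith
    field_simp
    ring
  have hsq : Tendsto (fun n : ℝ => Real.sqrt ((a + 1) - a ^ 2 / n)) atTop
      (nhds (Real.sqrt (a + 1))) := by
    have h0 : Tendsto (fun n : ℝ => (a + 1) - a ^ 2 / n) atTop (nhds (a + 1)) := by
      have := (tendsto_inv_atTop_zero (𝕜 := ℝ)).const_mul (a ^ 2)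
      simpa [div_eq_mul_inv] using (tendsto_const_nhds (x := a + 1)).sub this
    exact (Real.continuous_sqrt.continuousAt).tendsto.comp h0
  have hmain : Tendsto (fun n : ℝ =>
      n / (n + 4) * (2 * Real.sqrt ((a + 1) - a ^ 2 / n) + (a + 2))) atTop
      (nhds (1 * (2 * Real.sqrt (a + 1) + (a + 2)))) :=
    hfrac.mul ((hsq.const_mul 2).add tendsto_const_nhds)
  have heq : (2 : ℝ) + a + 2 * Real.sqrt (1 + a) = 1 * (2 * Real.sqrt (a + 1) + (a + 2)) := by
    rw [add_comm 1 a]; ring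
  rw [heq]
  refine hmain.congr' ?_
  filter_upwards [eventually_gt_atTop (0 : ℝ)] with n hn
  have hn4 : (0 : ℝ) < n + 4 := by linarith
  have key : (-a ^ 2 + a * n + n) / (n * (n + 4) ^ 2)
      = ((a + 1) - a ^ 2 / n) / (n + 4) ^ 2 := by
    field_simp
    ring
  rw [key]
  have hsqrt : Real.sqrt (((a + 1) - a ^ 2 / n) / (n + 4) ^ 2)
      = Real.sqrt ((a + 1) - a ^ 2 / n) / (n + 4) := by
    rcases le_or_gt 0 ((a + 1) - a ^ 2 / n) with h | h
    · rw [Real.sqrt_div h, Real.sqrt_sq hn4.le]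
    · rw [Real.sqrt_eq_zero_of_nonpos h.le,
        Real.sqrt_eq_zero_of_nonpos (div_nonpos_of_nonpos_of_nonneg h.le (sq_nonneg _)),
        zero_div]
  rw [hsqrt]
  have hne : (n + 4) ≠ 0 := hn4.ne'
  field_simp
end
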